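/- Let G be a finite abelian group, B = B(S,ρ) a Bohr set, b a positive integer, and B_b = {n ∈ B : b | n} (where divisibility is interpreted in ℤ/Nℤ via representatives, i.e., n is a multiple of b). Then |B_b| ≥ 4^{−|S|}|B|/b. -/
import Mathlib


open scoped BigOperators Classical
open Finset

noncomputable section

namespace BohrAux

noncomputable def L (z : AddCircle (1:ℝ)) : ℝ := (AddCircle.equivIco 1 (-(1/2)) z : ℝ)

lemma L_coe (z : AddCircle (1:ℝ)) : ((L z : ℝ) : AddCircle (1:ℝ)) = z :=
  (AddCircle.equivIco 1 (-(1/2))).symm_apply_apply z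

lemma L_mem (z : AddCircle (1:ℝ)) : L z ∈ Set.Ico (-(1/2):ℝ) (-(1/2)+1) :=
  (AddCircle.equivIco 1 (-(1/2)) z).2

lemma abs_L_le_half (z : AddCircle (1:ℝ)) : |L z| ≤ 1/2 := by
  have h := L_mem z
  rw [abs_le]
  exact ⟨h.1, by linarith [h.2]⟩

lemma norm_eq_abs_L (z : AddCircle (1:ℝ)) : ‖z‖ = |L z| := by
  conv_lhs => rw [← L_coe z]
  rw [AddCircle.norm_coe_eq_abs_iff (p := (1:ℝ)) one_ne_zero]
  simpa using abs_L_le_half z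

lemma norm_coe_le (r : ℝ) : ‖(r : AddCircle (1:ℝ))‖ ≤ |r| := by
  by_cases h : |r| ≤ 1/2
  · rw [(AddCircle.norm_coe_eq_abs_iff (p := (1:ℝ)) one_ne_zero).mpr (by simpa using h)]
  · have h1 : ‖(r : AddCircle (1:ℝ))‖ = |r - round r| := by
      have := AddCircle.norm_eq (p := (1:ℝ)) (x := r)
      simpa using this
    have := abs_sub_round r
    linarith [h1, not_le.mp h]

lemma abs_sub_lt_of_floor_div_eq {c x y : ℝ} (hc : 0 < c) (h : ⌊x/c⌋ = ⌊y/c⌋) :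
    |x - y| < c := by
  have hx1 : (⌊x/c⌋ : ℝ) ≤ x / c := Int.floor_le _
  have hx2 : x / c < ⌊x/c⌋ + 1 := Int.lt_floor_add_one _
  have hy1 : (⌊y/c⌋ : ℝ) ≤ y / c := Int.floor_le _
  have hy2 : y / c < ⌊y/c⌋ + 1 := Int.lt_floor_add_one _
  rw [h] at hx1 hx2
  have h1 : |x/c - y/c| < 1 := abs_sub_lt_iff.mpr ⟨by linarith, by linarith⟩
  rw [div_sub_div_same] at h1
  rw [abs_div, abs_of_pos hc, div_lt_one hc] at h1
  exact h1

end BohrAux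

def bohr {N : ℕ} [NeZero N] (S : Finset (ZMod N →+ AddCircle (1 : ℝ))) (ρ : ℝ) :
    Finset (ZMod N) :=
  Finset.univ.filter fun x => ∀ α ∈ S, ‖α x‖ < ρ

/-- The multiples of `b` inside `B`, divisibility interpreted via representatives. -/
def bohrMult {N : ℕ} [NeZero N] (B : Finset (ZMod N)) (b : ℕ) : Finset (ZMod N) :=
  B.filter fun n => b ∣ n.val

/-- `|B_b| ≥ 4^{−|S|} |B| / b` for a Bohr set `B = B(S, ρ)`. -/
theorem bohr_multiples_lower_bound {N : ℕ} [NeZero N]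
    (S : Finset (ZMod N →+ AddCircle (1 : ℝ))) (ρ : ℝ) (hρ : 0 < ρ)
    (b : ℕ) (hb : 0 < b) :
    ((bohrMult (bohr S ρ) b).card : ℝ) ≥
      (4 : ℝ) ^ (-(S.card : ℤ)) * ((bohr S ρ).card : ℝ) / b := by
  classical
  set B := bohr S ρ with hBdef
  rcases B.eq_empty_or_nonempty with hBe | hBne
  · rw [hBe]; simp [bohrMult]
  have hc : (0:ℝ) < ρ / 2 := by linarith
  -- classification map
  set f : ZMod N → ℕ × (↥S → ℤ) :=
    fun x => (x.val % b, fun α => ⌊BohrAux.L (α.1 x) / (ρ/2)⌋) with hfdef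
  set t : Finset (ℕ × (↥S → ℤ)) :=
    (Finset.range b) ×ˢ (Fintype.piFinset fun _ => Finset.Icc (-2) 1) with htdef
  have hbohr_mem : ∀ x ∈ B, ∀ α ∈ S, ‖α x‖ < ρ := by
    intro x hx
    exact (Finset.mem_filter.mp hx).2
  have hmaps : ∀ x ∈ B, f x ∈ t := by
    intro x hx
    simp only [htdef, hfdef, Finset.mem_product, Finset.mem_range, Fintype.mem_piFinset,
      Finset.mem_Icc]
    refine ⟨Nat.mod_lt _ hb, fun α => ?_⟩
    have hL : |BohrAux.L (α.1 x)| < ρ := by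
      rw [← BohrAux.norm_eq_abs_L]; exact hbohr_mem x hx α.1 α.2
    obtain ⟨hL1, hL2⟩ := abs_lt.mp hL
    constructor
    · apply Int.le_floor.mpr
      push_cast
      rw [le_div_iff₀ hc]
      linarith
    · have : ⌊BohrAux.L (α.1 x) / (ρ/2)⌋ < 2 := by
        apply Int.floor_lt.mpr
        push_cast
        rw [div_lt_iff₀ hc]
        linarith
      omega
  have htcard : t.card = b * 4 ^ S.card := by
    rw [htdef, Finset.card_product, Finset.card_range, Fintype.card_piFinset]
    congr 1
    simp only [Int.card_Icc]
    norm_num [Finset.prod_const, Fintype.card_coe]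
    rfl
  -- pigeonhole: largest fiber
  have htne : t.Nonempty := ⟨f hBne.choose, hmaps _ hBne.choose_spec⟩
  obtain ⟨y₀, hy₀t, hy₀max⟩ :=
    t.exists_max_image (fun y => (B.filter fun x => f x = y).card) htne
  set C := B.filter (fun x => f x = y₀) with hCdef
  have hsum : B.card = ∑ y ∈ t, (B.filter fun x => f x = y).card :=
    Finset.card_eq_sum_card_fiberwise hmaps
  have hBle : B.card ≤ t.card * C.card := by
    rw [hsum]
    calc ∑ y ∈ t, (B.filter fun x => f x = y).card
        ≤ ∑ _y ∈ t, C.card := Finset.sum_le_sum fun y hy => hy₀max y hy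
      _ = t.card * C.card := by rw [Finset.sum_const, smul_eq_mul]
  have hCne : C.Nonempty := by
    rw [← Finset.card_pos]
    rcases Nat.eq_zero_or_pos C.card with h | h
    · exfalso
      rw [h, Nat.mul_zero] at hBle
      have := Finset.card_pos.mpr hBne
      omega
    · exact h
  obtain ⟨x₀, hx₀C, hx₀min⟩ := C.exists_min_image (fun x => x.val) hCne
  have hmapC : ∀ x ∈ C, x - x₀ ∈ bohrMult B b := by
    intro x hx
    have hx' := Finset.mem_filter.mp hx
    have hx₀' := Finset.mem_filter.mp hx₀C
    have hfx : f x = f x₀ := hx'.2.trans hx₀'.2.symm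
    have hmod : x.val % b = x₀.val % b := congrArg Prod.fst hfx
    have hle : x₀.val ≤ x.val := hx₀min x hx
    rw [bohrMult, Finset.mem_filter]
    constructor
    · -- x - x₀ ∈ B
      rw [hBdef, bohr, Finset.mem_filter]
      refine ⟨Finset.mem_univ _, fun α hα => ?_⟩
      have hfl : ⌊BohrAux.L (α x) / (ρ/2)⌋ = ⌊BohrAux.L (α x₀) / (ρ/2)⌋ := by
        have h2 := congrArg Prod.snd hfx
        exact congrFun h2 ⟨α, hα⟩
      have hdist : |BohrAux.L (α x) - BohrAux.L (α x₀)| < ρ/2 :=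
        BohrAux.abs_sub_lt_of_floor_div_eq hc hfl
      have heq : α (x - x₀) =
          ((BohrAux.L (α x) - BohrAux.L (α x₀) : ℝ) : AddCircle (1:ℝ)) := by
        rw [map_sub, AddCircle.coe_sub, BohrAux.L_coe, BohrAux.L_coe]
      rw [heq]
      calc ‖((BohrAux.L (α x) - BohrAux.L (α x₀) : ℝ) : AddCircle (1:ℝ))‖
          ≤ |BohrAux.L (α x) - BohrAux.L (α x₀)| := BohrAux.norm_coe_le _
        _ < ρ/2 := hdist
        _ < ρ := by linarith
    · -- divisibility
      have hdvd : b ∣ x.val - x₀.val := (Nat.modEq_iff_dvd' hle).mp hmod.symm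
      have hcast : x - x₀ = ((x.val - x₀.val : ℕ) : ZMod N) := by
        rw [Nat.cast_sub hle]
        simp [ZMod.natCast_val, ZMod.cast_id]
      rw [hcast, ZMod.val_cast_of_lt (lt_of_le_of_lt (Nat.sub_le _ _) (ZMod.val_lt x))]
      exact hdvd
  have hcard : C.card ≤ (bohrMult B b).card := by
    apply Finset.card_le_card_of_injOn (fun x => x - x₀) hmapC
    intro x _ y _ h
    have := congrArg (· + x₀) h
    simpa using this
  have key : (B.card : ℝ) ≤ (b : ℝ) * 4 ^ S.card * ((bohrMult B b).card : ℝ) := by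
    have h1 : B.card ≤ b * 4 ^ S.card * (bohrMult B b).card := by
      calc B.card ≤ t.card * C.card := hBle
        _ = b * 4 ^ S.card * C.card := by rw [htcard]
        _ ≤ _ := Nat.mul_le_mul_left _ hcard
    exact_mod_cast h1
  have hb' : (0:ℝ) < b := by exact_mod_cast hb
  have h4 : (0:ℝ) < (4:ℝ) ^ S.card := by positivity
  rw [ge_iff_le, zpow_neg, zpow_natCast, div_le_iff₀ hb', inv_mul_eq_div, div_le_iff₀ h4]
  have hring : (b:ℝ) * 4 ^ S.card * ((bohrMult B b).card : ℝ)
      = ((bohrMult B b).card : ℝ) * b * 4 ^ S.card := by ring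
  linarith [key, hring]

end
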